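/- The state |0⟩ + √2·|1⟩, i.e. the 2×1 column vector (1, √2)ᵀ, does not belong to the Clifford+Triangle fragment: no matrix in the fragment of size 2×1 equals (1, √2)ᵀ. -/
import Mathlib


noncomputable section

/-- Matrices of size `2^m × 2^n`, indexed by bit strings. -/
abbrev QMat (m n : ℕ) := Matrix (Fin m → Fin 2) (Fin n → Fin 2) ℂ

/-- The Hadamard matrix `(1/√2)[[1,1],[1,-1]]` as a `2×2` generator. -/
def hadM : QMat 1 1 :=
  fun x y => if x 0 = 1 ∧ y 0 = 1 then -((Real.sqrt 2 : ℝ) : ℂ)⁻¹ else ((Real.sqrt 2 : ℝ) : ℂ)⁻¹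

/-- The triangle matrix `[[1,1],[0,1]]` as a `2×2` generator. -/
def triM : QMat 1 1 :=
  fun x y => if x 0 = 1 ∧ y 0 = 0 then 0 else 1

/-- The swap matrix on `ℂ²⊗ℂ²`. -/
def swapM : QMat 2 2 :=
  fun x y => if x 0 = y 1 ∧ x 1 = y 0 then 1 else 0

/-- The Z-spider `Z_k^{m,n} = |0⟩^{⊗m}⟨0|^{⊗n} + i^k |1⟩^{⊗m}⟨1|^{⊗n}`
(phase an integer multiple of π/2). -/
def zSpider (k : ℤ) (m n : ℕ) : QMat m n :=
  fun x y =>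
    (if (∀ i, x i = 0) ∧ (∀ j, y j = 0) then 1 else 0) +
      Complex.I ^ k * (if (∀ i, x i = 1) ∧ (∀ j, y j = 1) then 1 else 0)

/-- Kronecker (tensor) product of matrices on qubit registers. -/
def kronM {m n p q : ℕ} (A : QMat m n) (B : QMat p q) : QMat (m + p) (n + q) :=
  fun x y =>
    A (fun i => x (Fin.castAdd p i)) (fun j => y (Fin.castAdd q j)) *
      B (fun i => x (Fin.natAdd m i)) (fun j => y (Fin.natAdd n j))

/-- The Clifford+Triangle fragment: the smallest family of matrices containing the
Hadamard matrix, the triangle matrix, the swap matrix and all Z-spiders with phases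
integer multiples of π/2, closed under composition and Kronecker product. -/
inductive CliffordTriangle : {m n : ℕ} → QMat m n → Prop
  | had : CliffordTriangle hadM
  | tri : CliffordTriangle triM
  | swap : CliffordTriangle swapM
  | zspider (k : ℤ) (m n : ℕ) : CliffordTriangle (zSpider k m n)
  | mul {m n p : ℕ} {A : QMat m n} {B : QMat n p} :
      CliffordTriangle A → CliffordTriangle B → CliffordTriangle (A * B)
  | kron {m n p q : ℕ} {A : QMat m n} {B : QMat p q} :
      CliffordTriangle A → CliffordTriangle B → CliffordTriangle (kronM A B)

/-- The state `|0⟩ + √2·|1⟩`, i.e. the column vector `(1, √2)ᵀ`. -/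
def root2State : QMat 1 0 :=
  fun x _ => if x 0 = 0 then 1 else ((Real.sqrt 2 : ℝ) : ℂ)

def Gau : Subring ℂ where
  carrier := {z | ∃ a b : ℤ, z = (a : ℂ) + (b : ℂ) * Complex.I}
  zero_mem' := ⟨0, 0, by simp⟩
  one_mem' := ⟨1, 0, by simp⟩
  add_mem' := by
    rintro x y ⟨a, b, rfl⟩ ⟨c, d, rfl⟩
    exact ⟨a + c, b + d, by push_cast; ring⟩
  neg_mem' := by
    rintro x ⟨a, b, rfl⟩
    exact ⟨-a, -b, by push_cast; ring⟩
  mul_mem' := by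
    rintro x y ⟨a, b, rfl⟩ ⟨c, d, rfl⟩
    refine ⟨a * c - b * d, a * d + b * c, ?_⟩
    push_cast
    linear_combination ((b : ℂ) * (d : ℂ)) * Complex.I_sq

lemma I_zpow_mem (k : ℤ) : Complex.I ^ k ∈ Gau := by
  have h4 : Complex.I ^ (4 : ℤ) = 1 := by
    rw [show (4 : ℤ) = ((4 : ℕ) : ℤ) from rfl, zpow_natCast]
    norm_num [pow_succ, Complex.I_sq]
  have hk : k = 4 * (k / 4) + k % 4 := (Int.mul_ediv_add_emod k 4).symm
  have : Complex.I ^ k = Complex.I ^ (k % 4) := by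
    conv_lhs => rw [hk]
    rw [zpow_add₀ Complex.I_ne_zero, zpow_mul, h4, one_zpow, one_mul]
  rw [this]
  have h0 : 0 ≤ k % 4 := Int.emod_nonneg k (by norm_num)
  have h1 : k % 4 < 4 := Int.emod_lt_of_pos k (by norm_num)
  interval_cases h : (k % 4)
  · exact ⟨1, 0, by simp⟩
  · exact ⟨0, 1, by simp⟩
  · exact ⟨-1, 0, by rw [show (2:ℤ) = ((2:ℕ):ℤ) from rfl, zpow_natCast]; push_cast; simp [Complex.I_sq]⟩
  · exact ⟨0, -1, by rw [show (3:ℤ) = ((3:ℕ):ℤ) from rfl, zpow_natCast]; push_cast; simp [pow_succ, Complex.I_sq]⟩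

lemma sqrt2C_ne_zero : ((Real.sqrt 2 : ℝ) : ℂ) ≠ 0 := by
  simp [Real.sqrt_eq_zero']

lemma good {m n : ℕ} {M : QMat m n} (h : CliffordTriangle M) :
    ∃ s : ℕ, ∀ x y, ((Real.sqrt 2 : ℝ) : ℂ) ^ s * M x y ∈ Gau := by
  induction h with
  | had =>
      refine ⟨1, fun x y => ?_⟩
      unfold hadM
      split_ifs
      · exact ⟨-1, 0, by rw [pow_one, mul_neg, mul_inv_cancel₀ sqrt2C_ne_zero]; push_cast; ring⟩
      · exact ⟨1, 0, by rw [pow_one, mul_inv_cancel₀ sqrt2C_ne_zero]; push_cast; ring⟩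
  | tri =>
      refine ⟨0, fun x y => ?_⟩
      unfold triM
      rw [pow_zero, one_mul]
      split_ifs
      · exact Gau.zero_mem
      · exact Gau.one_mem
  | swap =>
      refine ⟨0, fun x y => ?_⟩
      unfold swapM
      rw [pow_zero, one_mul]
      split_ifs
      · exact Gau.one_mem
      · exact Gau.zero_mem
  | zspider k m n =>
      refine ⟨0, fun x y => ?_⟩
      unfold zSpider
      rw [pow_zero, one_mul]
      refine Gau.add_mem ?_ (Gau.mul_mem (I_zpow_mem k) ?_) <;>
        · split_ifs
          · exact Gau.one_mem
          · exact Gau.zero_mem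
  | @mul m n p A B hA hB ihA ihB =>
      obtain ⟨s, hs⟩ := ihA
      obtain ⟨t, ht⟩ := ihB
      refine ⟨s + t, fun x y => ?_⟩
      rw [Matrix.mul_apply, Finset.mul_sum]
      refine Gau.sum_mem fun z _ => ?_
      have heq : ((Real.sqrt 2 : ℝ) : ℂ) ^ (s + t) * (A x z * B z y) =
          (((Real.sqrt 2 : ℝ) : ℂ) ^ s * A x z) * (((Real.sqrt 2 : ℝ) : ℂ) ^ t * B z y) := by
        rw [pow_add]; ring
      rw [heq]
      exact Gau.mul_mem (hs x z) (ht z y)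
  | @kron m n p q A B hA hB ihA ihB =>
      obtain ⟨s, hs⟩ := ihA
      obtain ⟨t, ht⟩ := ihB
      refine ⟨s + t, fun x y => ?_⟩
      unfold kronM
      have heq : ((Real.sqrt 2 : ℝ) : ℂ) ^ (s + t) *
          (A (fun i => x (Fin.castAdd p i)) (fun j => y (Fin.castAdd q j)) *
            B (fun i => x (Fin.natAdd m i)) (fun j => y (Fin.natAdd n j))) =
          (((Real.sqrt 2 : ℝ) : ℂ) ^ s * A (fun i => x (Fin.castAdd p i)) (fun j => y (Fin.castAdd q j))) *
          (((Real.sqrt 2 : ℝ) : ℂ) ^ t * B (fun i => x (Fin.natAdd m i)) (fun j => y (Fin.natAdd n j))) := by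
        rw [pow_add]; ring
      rw [heq]
      exact Gau.mul_mem (hs _ _) (ht _ _)

/-- The state `|0⟩ + √2·|1⟩` cannot be constructed in the Clifford+Triangle
fragment. -/
theorem root2State_not_cliffordTriangle :
    ∀ M : QMat 1 0, CliffordTriangle M → M ≠ root2State := by
  intro M hM heq
  obtain ⟨s, hs⟩ := good hM
  subst heq
  have h0 := hs (fun _ => 0) (fun i => i.elim0)
  have h1 := hs (fun _ => 1) (fun i => i.elim0)
  unfold root2State at h0 h1
  norm_num at h0 h1
  obtain ⟨a, b, hab⟩ := h0
  obtain ⟨c, d, hcd⟩ := h1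
  -- take real/imaginary parts
  have hs2 : ((Real.sqrt 2 : ℝ) : ℂ) ^ s = ((Real.sqrt 2 ^ s : ℝ) : ℂ) := by push_cast; ring
  rw [hs2] at hab
  have hre : Real.sqrt 2 ^ s = (a : ℝ) := by
    have := congrArg Complex.re hab
    simpa [← Complex.ofReal_pow] using this
  have hcd' : ((Real.sqrt 2 ^ (s + 1) : ℝ) : ℂ) = (c : ℂ) + (d : ℂ) * Complex.I := by
    rw [← hcd]; push_cast; ring
  have hre' : Real.sqrt 2 ^ (s + 1) = (c : ℝ) := by
    have := congrArg Complex.re hcd'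
    simpa [← Complex.ofReal_pow] using this
  have hapos : (0 : ℝ) < (a : ℝ) := by
    rw [← hre]
    positivity
  have hsq : Real.sqrt 2 = (c : ℝ) / (a : ℝ) := by
    rw [← hre, ← hre', pow_succ]
    field_simp
  exact irrational_sqrt_two ⟨(c : ℚ) / (a : ℚ), by rw [hsq]; push_cast; ring⟩


end
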